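/- arXiv:1512.01603 — 3 statements merged into one kernel-verified Lean document; each statement's English description precedes it below -/
import Mathlib

section
/- Let f(x) = ∑_{S ⊆ [n], |S| ≤ k} a_S ∏_{i∈S} x_i be an n-variate multilinear polynomial of degree at most k with real coefficients. Then there exist m = O(k) (one may take m ≤ 2(k+1)) and vectors α, β, c ∈ ℝ^m such that: (i) f˘(y,z) = ∑_{i=1}^m c_i f(α_i y + β_i z) as polynomials in the 2n variables y, z; (ii) ∑_{i=1}^m |c_i| ≤ C·k² for a universal constant C; (iii) |α_i| + |β_i| = 1 for every i ∈ [m]; (iv) |α_i|, |β_i| ≥ 1/(C'·k²) for every i ∈ [m], for a universal constant C'. -/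
open Finset

/-- Evaluation of the multilinear polynomial with coefficients `a` at the point `x`. -/
noncomputable def evalPoly {n : ℕ} (a : Finset (Fin n) → ℝ) (x : Fin n → ℝ) : ℝ :=
  ∑ S : Finset (Fin n), a S * ∏ i ∈ S, x i

/-- One-block decoupled version `f˘(y,z) = ∑_S a_S ∑_{i∈S} y_i ∏_{j∈S∖i} z_j`. -/
noncomputable def odec {n : ℕ} (a : Finset (Fin n) → ℝ) (y z : Fin n → ℝ) : ℝ :=
  ∑ S : Finset (Fin n), a S * ∑ i ∈ S, y i * ∏ j ∈ S.erase i, z j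

/-!
For fixed `y, z` the polynomial `Q(t) = f(t y + (1 - t) z) - f(-t y + (1 - t) z)` has degree
`≤ k`, `Q(0) = 0` and `Q'(0) = 2 f˘(y, z)`. Hence `Q(t) / t` has degree `< k`, and its value
`2 f˘(y, z)` at `0` is recovered by Lagrange interpolation at the `k` nodes
`tᵢ = (i / (k + 1))²`, `1 ≤ i ≤ k`. For these square nodes the weight of `tᵢ` at `0` has absolute
value `2 (k!)² / ((k - i)! (k + i)!) ≤ 2`, so the coefficient in front of `f(±tᵢ y + (1 - tᵢ) z)`
is at most `1 / tᵢ = (k + 1)² / i²` in absolute value; these sum to `O(k²)`. Finally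
`tᵢ, 1 - tᵢ ≥ 1 / (k + 1)²`.
-/

open Nat Polynomial

theorem factorial_mul_factorial_le_factorial_sub_mul_factorial_add {K i : ℕ} (hi : i ≤ K) :
    K ! * K ! ≤ (K - i)! * (K + i)! := by
  calc K ! * K ! = (K - i)! * K.descFactorial i * K ! := by rw [factorial_mul_descFactorial hi]
    _ ≤ (K - i)! * (K + 1).ascFactorial i * K ! := by
      gcongr
      exact (descFactorial_le_pow K i).trans
        ((Nat.pow_le_pow_left K.le_succ i).trans (pow_succ_le_ascFactorial _ i))
    _ = (K - i)! * (K + i)! := by rw [← factorial_mul_ascFactorial]; ring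

theorem factorial_mul_prod_Icc_add (i K : ℕ) : i ! * ∏ j ∈ Icc 1 K, (j + i) = (K + i)! := by
  induction K with
  | zero => simp
  | succ K ih =>
    rw [prod_Icc_succ_top (by omega), ← mul_assoc, ih, add_right_comm, factorial_succ]
    ring

theorem prod_Ioc_sub_eq_factorial {i K : ℕ} (hi : i ≤ K) : ∏ j ∈ Ioc i K, (j - i) = (K - i)! := by
  induction K, hi using Nat.le_induction with
  | base => simp
  | succ K hiK ih =>
    rw [prod_Ioc_succ_top hiK, ih, Nat.sub_add_comm hiK, factorial_succ]
    ring

theorem prod_Ico_one_sub_eq_factorial {i : ℕ} (hi : 1 ≤ i) : ∏ j ∈ Ico 1 i, (i - j) = (i - 1)! := by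
  rw [prod_Ico_reflect (fun j => j) 1 (Nat.le_succ i), Nat.add_sub_cancel, Nat.add_sub_cancel_left,
    ← Nat.sub_add_cancel hi, prod_Ico_id_eq_factorial, Nat.sub_add_cancel hi]

theorem prod_erase_Icc_dist {K i : ℕ} (hi : i ∈ Icc 1 K) :
    ∏ j ∈ (Icc 1 K).erase i, Nat.dist j i = (i - 1)! * (K - i)! := by
  obtain ⟨hi1, hiK⟩ := mem_Icc.1 hi
  have hsplit : (Icc 1 K).erase i = Ico 1 i ∪ Ioc i K := by
    ext j; simp only [mem_erase, mem_Icc, mem_union, mem_Ico, mem_Ioc]; omega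
  rw [hsplit, prod_union (disjoint_left.2 fun j hj hj' => by
      simp only [mem_Ico, mem_Ioc] at hj hj'; omega),
    prod_congr rfl fun j hj => Nat.dist_eq_sub_of_le (mem_Ico.1 hj).2.le,
    prod_congr rfl fun j hj => Nat.dist_eq_sub_of_le_right (mem_Ioc.1 hj).1.le,
    prod_Ico_one_sub_eq_factorial hi1, prod_Ioc_sub_eq_factorial hiK]

theorem prod_erase_Icc_sq_le {K i : ℕ} (hi : i ∈ Icc 1 K) :
    ∏ j ∈ (Icc 1 K).erase i, j ^ 2 ≤ 2 * ∏ j ∈ (Icc 1 K).erase i, (Nat.dist j i * (j + i)) := by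
  obtain ⟨hi1, hiK⟩ := mem_Icc.1 hi
  have hfact : i ! = i * (i - 1)! := by rw [← Nat.mul_factorial_pred (by omega)]
  have hid : (∏ j ∈ (Icc 1 K).erase i, j) * i = K ! := by
    rw [prod_erase_mul _ _ hi, ← Ico_add_one_right_eq_Icc, prod_Ico_id_eq_factorial]
  have hadd : i ! * ((∏ j ∈ (Icc 1 K).erase i, (j + i)) * (i + i)) = (K + i)! := by
    rw [prod_erase_mul _ (fun j => j + i) hi, factorial_mul_prod_Icc_add]
  refine Nat.le_of_mul_le_mul_right ?_ (Nat.mul_pos (by omega : 0 < i) (factorial_pos i))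
  calc (∏ j ∈ (Icc 1 K).erase i, j ^ 2) * (i * i !)
      = K ! * K ! * (i - 1)! := by rw [prod_pow, ← hid, hfact]; ring
    _ ≤ (K - i)! * (K + i)! * (i - 1)! :=
      Nat.mul_le_mul_right _ (factorial_mul_factorial_le_factorial_sub_mul_factorial_add hiK)
    _ = 2 * (∏ j ∈ (Icc 1 K).erase i, (Nat.dist j i * (j + i))) * (i * i !) := by
      rw [prod_mul_distrib, prod_erase_Icc_dist hi, ← hadd, hfact]; ring

theorem Lagrange.eval_basis {F ι : Type*} [Field F] [DecidableEq ι] (s : Finset ι) (v : ι → F)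
    (i : ι) (x : F) :
    (Lagrange.basis s v i).eval x = ∏ j ∈ s.erase i, (x - v j) / (v i - v j) := by
  simp [Lagrange.basis, Lagrange.basisDivisor, eval_prod, div_eq_inv_mul]

theorem coeff_one_eq_sum_eval_basis {F ι : Type*} [Field F] [DecidableEq ι] {s : Finset ι}
    {v : ι → F} (hvs : Set.InjOn v s) (hv : ∀ i ∈ s, v i ≠ 0) {p : F[X]} (hp0 : p.coeff 0 = 0)
    (hp : p.degree ≤ #s) :
    p.coeff 1 = ∑ i ∈ s, (Lagrange.basis s v i).eval 0 / v i * p.eval (v i) := by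
  have hdeg : p.divX.degree < #s := by
    rcases eq_or_ne p 0 with rfl | hp'
    · simp
    · exact (degree_divX_lt hp').trans_le hp
  have hmulX : ∀ x, p.eval x = p.divX.eval x * x := fun x => by
    conv_lhs => rw [← divX_mul_X_add p]
    simp [hp0]
  rw [← coeff_divX, coeff_zero_eq_eval_zero]
  conv_lhs => rw [Lagrange.eq_interpolate hvs hdeg]
  rw [Lagrange.interpolate_apply, eval_finsetSum]
  refine sum_congr rfl fun i hi => ?_
  rw [eval_mul, eval_C, hmulX]
  field_simp [hv i hi]

noncomputable def sqNode (k i : ℕ) : ℝ := ((i : ℝ) / (k + 1)) ^ 2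

theorem sqNode_injective (k : ℕ) : Function.Injective (sqNode k) := by
  intro i j h
  have := (pow_left_inj₀ (by positivity) (by positivity) two_ne_zero).1 h
  field_simp at this
  exact_mod_cast this

theorem sqNode_pos {k i : ℕ} (hi : 0 < i) : 0 < sqNode k i := by
  unfold sqNode; positivity

theorem inv_sq_le_sqNode {k i : ℕ} (hi : 1 ≤ i) : 1 / ((k : ℝ) + 1) ^ 2 ≤ sqNode k i := by
  rw [sqNode, div_pow]
  gcongr
  exact one_le_pow₀ (by exact_mod_cast hi)

theorem inv_sq_le_one_sub_sqNode {k i : ℕ} (hi : i ≤ k) :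
    1 / ((k : ℝ) + 1) ^ 2 ≤ 1 - sqNode k i := by
  have hik : (i : ℝ) ≤ k := by exact_mod_cast hi
  rw [sqNode, div_pow, le_sub_iff_add_le, ← add_div, div_le_one (by positivity)]
  nlinarith

theorem sqNode_mem_Ioo {k i : ℕ} (hi : i ∈ Icc 1 k) : sqNode k i ∈ Set.Ioo 0 1 := by
  obtain ⟨hi1, hik⟩ := mem_Icc.1 hi
  have h := inv_sq_le_one_sub_sqNode (k := k) hik
  exact ⟨sqNode_pos hi1, by linarith [show (0 : ℝ) < 1 / ((k : ℝ) + 1) ^ 2 by positivity]⟩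

theorem succ_sq_le_four_mul_sq {k : ℕ} (hk : 1 ≤ k) : ((k : ℝ) + 1) ^ 2 ≤ 4 * (k : ℝ) ^ 2 := by
  have : (1 : ℝ) ≤ k := by exact_mod_cast hk
  nlinarith

theorem one_div_four_mul_sq_le_sqNode_and_one_sub_sqNode {k i : ℕ} (hi : i ∈ Icc 1 k) :
    1 / (4 * (k : ℝ) ^ 2) ≤ sqNode k i ∧ 1 / (4 * (k : ℝ) ^ 2) ≤ 1 - sqNode k i := by
  obtain ⟨hi1, hik⟩ := mem_Icc.1 hi
  have h : 1 / (4 * (k : ℝ) ^ 2) ≤ 1 / ((k : ℝ) + 1) ^ 2 :=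
    one_div_le_one_div_of_le (by positivity) (succ_sq_le_four_mul_sq (hi1.trans hik))
  exact ⟨h.trans (inv_sq_le_sqNode hi1), h.trans (inv_sq_le_one_sub_sqNode hik)⟩

theorem abs_div_sqNode_sub_sqNode {k i j : ℕ} (hij : j ≠ i) :
    |(0 - sqNode k j) / (sqNode k i - sqNode k j)| =
      ((j ^ 2 : ℕ) : ℝ) / ((Nat.dist j i * (j + i) : ℕ) : ℝ) := by
  have hij' : (j : ℝ) ≠ i := by exact_mod_cast hij
  have hne : (i : ℝ) ^ 2 - j ^ 2 ≠ 0 := sub_ne_zero.2 fun h =>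
    hij' ((pow_left_inj₀ (by positivity) (by positivity) two_ne_zero).1 h).symm
  have : (0 - sqNode k j) / (sqNode k i - sqNode k j) = -((j : ℝ) ^ 2 / (i ^ 2 - j ^ 2)) := by
    unfold sqNode; field_simp; ring
  rw [this, abs_neg, abs_div, abs_of_nonneg (by positivity)]
  rcases lt_or_gt_of_ne hij with h | h
  · have h' : (j : ℝ) < i := by exact_mod_cast h
    rw [Nat.dist_eq_sub_of_le h.le, abs_of_pos (by nlinarith)]
    push_cast [h.le]; ring
  · have h' : (i : ℝ) < j := by exact_mod_cast h
    rw [Nat.dist_eq_sub_of_le_right h.le, abs_of_neg (by nlinarith)]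
    push_cast [h.le]; ring

theorem abs_eval_zero_basis_sqNode_le {k i : ℕ} (hi : i ∈ Icc 1 k) :
    |(Lagrange.basis (Icc 1 k) (sqNode k) i).eval 0| ≤ 2 := by
  rw [Lagrange.eval_basis, abs_prod,
    prod_congr rfl fun j hj => abs_div_sqNode_sub_sqNode (ne_of_mem_erase hj), prod_div_distrib,
    ← Nat.cast_prod, ← Nat.cast_prod, div_le_iff₀]
  · exact_mod_cast prod_erase_Icc_sq_le hi
  · exact Nat.cast_pos.2 <| prod_pos fun j hj =>
      Nat.mul_pos (Nat.dist_pos_of_ne (ne_of_mem_erase hj)) (Nat.add_pos_right _ (mem_Icc.1 hi).1)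

theorem coeff_one_prod_C_mul_X_add_C {R ι : Type*} [CommRing R] [DecidableEq ι] (s : Finset ι)
    (w z : ι → R) :
    (∏ i ∈ s, (C (w i) * X + C (z i))).coeff 1 = ∑ i ∈ s, w i * ∏ j ∈ s.erase i, z j := by
  have h := coeff_derivative (∏ i ∈ s, (C (w i) * X + C (z i))) 0
  rw [zero_add, Nat.cast_zero, zero_add, mul_one, coeff_zero_eq_eval_zero,
    derivative_prod_finset] at h
  rw [← h, eval_finsetSum]
  refine sum_congr rfl fun i _ => ?_
  simp only [eval_prod, eval_add, eval_mul, eval_C, eval_X, derivative_add, derivative_C,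
    derivative_C_mul_X, mul_zero, zero_add, add_zero]
  exact mul_comm _ _

section LinePoly

variable {n : ℕ} (a : Finset (Fin n) → ℝ) (z w : Fin n → ℝ)

noncomputable def linePoly : ℝ[X] :=
  ∑ S : Finset (Fin n), C (a S) * ∏ i ∈ S, (C (w i) * X + C (z i))

theorem eval_linePoly (t : ℝ) :
    (linePoly a z w).eval t = evalPoly a (fun i => w i * t + z i) := by
  simp [linePoly, evalPoly, eval_finsetSum, eval_prod]

theorem coeff_zero_linePoly : (linePoly a z w).coeff 0 = evalPoly a z := by
  simp [coeff_zero_eq_eval_zero, eval_linePoly]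

theorem coeff_one_linePoly : (linePoly a z w).coeff 1 = odec a w z := by
  simp [linePoly, odec, coeff_one_prod_C_mul_X_add_C]

theorem degree_linePoly_le {k : ℕ} (ha : ∀ S : Finset (Fin n), k < S.card → a S = 0) :
    (linePoly a z w).degree ≤ k := by
  rw [← natDegree_le_iff_degree_le]
  refine natDegree_sum_le_of_forall_le _ _ fun S _ => ?_
  by_cases hS : k < S.card
  · simp [ha S hS]
  · refine (natDegree_C_mul_le _ _).trans <| (natDegree_prod_le _ _).trans ?_
    calc ∑ i ∈ S, (C (w i) * X + C (z i)).natDegree ≤ #S • 1 :=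
          sum_le_card_nsmul _ _ _ fun i _ => natDegree_linear_le
      _ ≤ k := by simpa using not_lt.1 hS

end LinePoly

theorem odec_sub_odec_eq_two_mul {n : ℕ} (a : Finset (Fin n) → ℝ) (y z : Fin n → ℝ) :
    odec a (fun i => y i - z i) z - odec a (fun i => -y i - z i) z = 2 * odec a y z := by
  simp only [odec, ← sum_sub_distrib, mul_sum, ← mul_sub]
  exact sum_congr rfl fun S _ => sum_congr rfl fun i _ => by ring

noncomputable def decouplingCoeff (k i : ℕ) : ℝ :=
  (Lagrange.basis (Icc 1 k) (sqNode k) i).eval 0 / (2 * sqNode k i)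

theorem odec_eq_sum_decouplingCoeff {n k : ℕ} (a : Finset (Fin n) → ℝ)
    (ha : ∀ S : Finset (Fin n), k < S.card → a S = 0) (y z : Fin n → ℝ) :
    odec a y z = ∑ i ∈ Icc 1 k, decouplingCoeff k i *
      (evalPoly a (fun j => sqNode k i * y j + (1 - sqNode k i) * z j) -
        evalPoly a (fun j => -sqNode k i * y j + (1 - sqNode k i) * z j)) := by
  set Q := linePoly a z (fun j => y j - z j) - linePoly a z (fun j => -y j - z j)
  have hQ0 : Q.coeff 0 = 0 := by simp [Q, coeff_zero_linePoly]
  have hQ1 : Q.coeff 1 = 2 * odec a y z := by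
    simp only [Q, coeff_sub, coeff_one_linePoly, odec_sub_odec_eq_two_mul]
  have hQdeg : Q.degree ≤ #(Icc 1 k) := by
    rw [Nat.card_Icc, Nat.add_sub_cancel]
    exact (degree_sub_le _ _).trans
      (max_le (degree_linePoly_le a _ _ ha) (degree_linePoly_le a _ _ ha))
  have key := coeff_one_eq_sum_eval_basis (s := Icc 1 k) (sqNode_injective k).injOn
    (fun i hi => (sqNode_pos (mem_Icc.1 hi).1).ne') hQ0 hQdeg
  rw [hQ1] at key
  rw [← mul_left_cancel_iff_of_pos (two_pos (α := ℝ)), key, mul_sum]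
  refine sum_congr rfl fun i hi => ?_
  have hv := (sqNode_pos (k := k) (mem_Icc.1 hi).1).ne'
  have hplus : evalPoly a (fun j => (y j - z j) * sqNode k i + z j) =
      evalPoly a (fun j => sqNode k i * y j + (1 - sqNode k i) * z j) :=
    congrArg _ (funext fun j => by ring)
  have hminus : evalPoly a (fun j => (-y j - z j) * sqNode k i + z j) =
      evalPoly a (fun j => -sqNode k i * y j + (1 - sqNode k i) * z j) :=
    congrArg _ (funext fun j => by ring)
  simp only [Q, eval_sub, eval_linePoly, decouplingCoeff, hplus, hminus]
  field_simp

theorem sum_Icc_inv_sq_le_two (k : ℕ) : ∑ i ∈ Icc 1 k, ((i : ℝ) ^ 2)⁻¹ ≤ 2 := by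
  have h := sum_Ioo_inv_sq_le (α := ℝ) 0 (k + 1)
  have hIoo : Ioo 0 (k + 1) = Icc 1 k := by ext; simp only [mem_Ioo, mem_Icc]; omega
  rwa [Nat.cast_zero, zero_add, div_one, hIoo] at h

theorem abs_decouplingCoeff_le {k i : ℕ} (hi : i ∈ Icc 1 k) :
    |decouplingCoeff k i| ≤ 4 * (k : ℝ) ^ 2 * ((i : ℝ) ^ 2)⁻¹ := by
  obtain ⟨hi1, hik⟩ := mem_Icc.1 hi
  have hv := sqNode_pos (k := k) hi1
  have hi0 : (i : ℝ) ≠ 0 := by exact_mod_cast (show 0 < i from hi1).ne'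
  rw [decouplingCoeff, abs_div, abs_of_pos (show (0 : ℝ) < 2 * sqNode k i by positivity)]
  calc |(Lagrange.basis (Icc 1 k) (sqNode k) i).eval 0| / (2 * sqNode k i)
      ≤ 2 / (2 * sqNode k i) := by gcongr; exact abs_eval_zero_basis_sqNode_le hi
    _ = ((k : ℝ) + 1) ^ 2 * ((i : ℝ) ^ 2)⁻¹ := by rw [sqNode]; field_simp
    _ ≤ 4 * (k : ℝ) ^ 2 * ((i : ℝ) ^ 2)⁻¹ := by
      gcongr; exact succ_sq_le_four_mul_sq (hi1.trans hik)

theorem sum_abs_decouplingCoeff_le (k : ℕ) :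
    ∑ i ∈ Icc 1 k, |decouplingCoeff k i| ≤ 8 * (k : ℝ) ^ 2 :=
  calc ∑ i ∈ Icc 1 k, |decouplingCoeff k i|
      ≤ ∑ i ∈ Icc 1 k, 4 * (k : ℝ) ^ 2 * ((i : ℝ) ^ 2)⁻¹ :=
        sum_le_sum fun i hi => abs_decouplingCoeff_le hi
    _ = 4 * (k : ℝ) ^ 2 * ∑ i ∈ Icc 1 k, ((i : ℝ) ^ 2)⁻¹ := by rw [mul_sum]
    _ ≤ 4 * (k : ℝ) ^ 2 * 2 := by gcongr; exact sum_Icc_inv_sq_le_two k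
    _ = 8 * (k : ℝ) ^ 2 := by ring

section Indexing

variable (k : ℕ)

theorem sum_fin_add_one_eq_sum_Icc (h : ℕ → ℝ) : ∑ j : Fin k, h (j + 1) = ∑ t ∈ Icc 1 k, h t := by
  rw [Fin.sum_univ_eq_sum_range (fun j => h (j + 1)), range_eq_Ico, sum_Ico_add', zero_add,
    Ico_add_one_right_eq_Icc]

def nodeIndex : Fin (k + k) → ℕ := Fin.addCases (fun j => j + 1) (fun j => j + 1)

def nodeSign : Fin (k + k) → ℝ := Fin.addCases (fun _ => 1) (fun _ => -1)

theorem nodeIndex_mem (i : Fin (k + k)) : nodeIndex k i ∈ Icc 1 k := by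
  refine Fin.addCases (fun j => ?_) (fun j => ?_) i <;>
    simp only [nodeIndex, Fin.addCases_left, Fin.addCases_right, mem_Icc] <;> omega

theorem abs_nodeSign (i : Fin (k + k)) : |nodeSign k i| = 1 := by
  refine Fin.addCases (fun j => ?_) (fun j => ?_) i <;>
    simp only [nodeSign, Fin.addCases_left, Fin.addCases_right, abs_one, abs_neg]

theorem sum_nodeSign_nodeIndex (g : ℝ → ℕ → ℝ) :
    ∑ i, g (nodeSign k i) (nodeIndex k i) = ∑ t ∈ Icc 1 k, (g 1 t + g (-1) t) := by
  simp only [Fin.sum_univ_add, nodeSign, nodeIndex, Fin.addCases_left, Fin.addCases_right,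
    sum_fin_add_one_eq_sum_Icc k (g 1), sum_fin_add_one_eq_sum_Icc k (g (-1)), sum_add_distrib]

end Indexing

theorem stmt1 :
    ∃ C C' : ℝ, 0 < C ∧ 0 < C' ∧
      ∀ (n k : ℕ) (a : Finset (Fin n) → ℝ),
        (∀ S : Finset (Fin n), k < S.card → a S = 0) →
        ∃ (m : ℕ) (α β c : Fin m → ℝ),
          m ≤ 2 * (k + 1) ∧
          (∀ y z : Fin n → ℝ,
            odec a y z = ∑ i, c i * evalPoly a (fun j => α i * y j + β i * z j)) ∧
          (∑ i, |c i|) ≤ C * (k : ℝ) ^ 2 ∧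
          (∀ i, |α i| + |β i| = 1) ∧
          (∀ i, 1 / (C' * (k : ℝ) ^ 2) ≤ |α i| ∧ 1 / (C' * (k : ℝ) ^ 2) ≤ |β i|) := by
  refine ⟨16, 4, by norm_num, by norm_num, fun n k a ha => ?_⟩
  refine ⟨k + k, fun i => nodeSign k i * sqNode k (nodeIndex k i),
    fun i => 1 - sqNode k (nodeIndex k i),
    fun i => nodeSign k i * decouplingCoeff k (nodeIndex k i), by omega, fun y z => ?_, ?_, fun i => ?_, fun i => ?_⟩
  · rw [odec_eq_sum_decouplingCoeff a ha y z, sum_nodeSign_nodeIndex k fun s t =>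
      s * decouplingCoeff k t * evalPoly a fun j => s * sqNode k t * y j + (1 - sqNode k t) * z j]
    refine sum_congr rfl fun t _ => ?_
    simp only [one_mul, neg_one_mul]
    ring
  · rw [sum_nodeSign_nodeIndex k fun s t => |s * decouplingCoeff k t|]
    simp only [one_mul, neg_one_mul, abs_neg, ← two_mul, ← mul_sum]
    linarith [sum_abs_decouplingCoeff_le k]
  · obtain ⟨h0, h1⟩ := sqNode_mem_Ioo (nodeIndex_mem k i)
    rw [abs_mul, abs_nodeSign, one_mul, abs_of_pos h0, abs_of_pos (sub_pos.2 h1)]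
    ring
  · obtain ⟨h0, h1⟩ := sqNode_mem_Ioo (nodeIndex_mem k i)
    rw [abs_mul, abs_nodeSign, one_mul, abs_of_pos h0, abs_of_pos (sub_pos.2 h1)]
    exact one_div_four_mul_sq_le_sqNode_and_one_sub_sqNode (nodeIndex_mem k i)
end

section
/- There is a universal constant C such that the following holds. Let f(x) = ∑_{S ⊆ [n], |S| ≤ k} a_S ∏_{i∈S} x_i be an n-variate multilinear polynomial of degree at most k with coefficients a_S in a separable Banach space, and let x, y, z be independent n-dimensional standard Gaussian random vectors (i.i.d. N(0,1) coordinates). Then for all t > 0, Pr[‖f˘(y,z)‖ > C·k·t] ≤ C·k · Pr[‖f(x)‖ > t]. -/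
open Finset MeasureTheory ProbabilityTheory

/-- Evaluation of the multilinear polynomial with Banach-space coefficients `a` at `x`. -/
noncomputable def evalPolyE {n : ℕ} {E : Type*} [NormedAddCommGroup E] [NormedSpace ℝ E]
    (a : Finset (Fin n) → E) (x : Fin n → ℝ) : E :=
  ∑ S : Finset (Fin n), (∏ i ∈ S, x i) • a S

/-- One-block decoupled version `f˘(y,z) = ∑_S a_S ∑_{i∈S} y_i ∏_{j∈S∖i} z_j`. -/
noncomputable def odecE {n : ℕ} {E : Type*} [NormedAddCommGroup E] [NormedSpace ℝ E]
    (a : Finset (Fin n) → E) (y z : Fin n → ℝ) : E :=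
  ∑ S : Finset (Fin n), (∑ i ∈ S, y i * ∏ j ∈ S.erase i, z j) • a S

/-- Standard Gaussian measure on `ℝⁿ` (i.i.d. `N(0,1)` coordinates). -/
noncomputable def gaussPi (n : ℕ) : Measure (Fin n → ℝ) :=
  Measure.pi fun _ => gaussianReal 0 1

/-!
The decoupled polynomial is a derivative: `f˘(y, z) = d/dθ f(sin θ • y + cos θ • z)` at `θ = 0`,
and `θ ↦ f(sin θ • y + cos θ • z)` is a trigonometric polynomial of degree at most `k`.
M. Riesz's interpolation formula `p'(0) = ∑_{j < 2k} c_j p(θ_j)`, with `θ_j = (2j+1)π/(2k)` and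
`c_j = (-1)^j / (2k (1 - cos θ_j))`, therefore writes `f˘(y, z)` as a combination of `2k` values of
`f` whose coefficients satisfy `∑ |c_j| = k`. Each `sin θ_j • y + cos θ_j • z` is again a standard
Gaussian vector, so a union bound over `j` gives the claim with `C = 2`.

The formula is checked on the exponentials `e^{imθ}`, `|m| ≤ k`, through the roots
`ζ_j = e^{iθ_j}` of `ζ^{2k} = -1`, for which `|c_j| = -ζ_j / (k (1 - ζ_j)^2)`.
-/

namespace Decoupling

open Complex
open scoped Real

noncomputable def rieszNode (k j : ℕ) : ℝ := (2 * j + 1) * π / (2 * k)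

noncomputable def rieszWeight (k j : ℕ) : ℝ := (2 * k * (1 - Real.cos (rieszNode k j)))⁻¹

noncomputable def rieszCoeff (k j : ℕ) : ℝ := (-1) ^ j * rieszWeight k j

noncomputable def rieszRoot (k j : ℕ) : ℂ := exp (rieszNode k j * I)

variable {k : ℕ}

lemma rieszRoot_eq_pow (k j : ℕ) :
    rieszRoot k j = exp (2 * π * I / (4 * k : ℕ)) ^ (2 * j + 1) := by
  rw [rieszRoot, rieszNode, ← exp_nat_mul]
  congr 1
  push_cast
  field_simp
  ring

lemma rieszRoot_pow_self (hk : 0 < k) (j : ℕ) : rieszRoot k j ^ k = I * (-1) ^ j := by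
  have hω : exp (2 * π * I / (4 * k : ℕ)) ^ k = I := by
    rw [← exp_nat_mul]
    convert exp_pi_div_two_mul_I using 2
    have hk' : (k : ℂ) ≠ 0 := by exact_mod_cast hk.ne'
    push_cast
    field_simp
    ring
  rw [rieszRoot_eq_pow, ← pow_mul, show (2 * j + 1) * k = k * (2 * j + 1) by ring, pow_mul, hω,
    pow_succ, pow_mul, I_sq, mul_comm]

lemma rieszRoot_pow_two_mul (hk : 0 < k) (j : ℕ) : rieszRoot k j ^ (2 * k) = -1 := by
  rw [mul_comm, pow_mul, rieszRoot_pow_self hk, mul_pow, I_sq, ← pow_mul, mul_comm j,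
    pow_mul, neg_one_sq, one_pow, mul_one]

lemma rieszRoot_ne_one (hk : 0 < k) (j : ℕ) : rieszRoot k j ≠ 1 := by
  intro h
  have h2k := rieszRoot_pow_two_mul hk j
  rw [h, one_pow] at h2k
  norm_num at h2k

lemma sum_rieszRoot_pow (hk : 0 < k) {t : ℕ} (ht₀ : 0 < t) (ht : t < 2 * k) :
    ∑ j ∈ range (2 * k), rieszRoot k j ^ t = 0 := by
  set ω := exp (2 * π * I / (4 * k : ℕ))
  have hω : IsPrimitiveRoot ω (4 * k) := isPrimitiveRoot_exp _ (by omega)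
  have hne : ω ^ (2 * t) ≠ 1 := hω.pow_ne_one_of_pos_of_lt (by omega) (by omega)
  have hpow : (ω ^ (2 * t)) ^ (2 * k) = 1 := by
    rw [← pow_mul, show 2 * t * (2 * k) = 4 * k * t by ring, pow_mul, hω.pow_eq_one, one_pow]
  calc ∑ j ∈ range (2 * k), rieszRoot k j ^ t
      = ω ^ t * ∑ j ∈ range (2 * k), (ω ^ (2 * t)) ^ j := by
        rw [mul_sum]
        refine sum_congr rfl fun j _ => ?_
        rw [rieszRoot_eq_pow, ← pow_mul, ← pow_mul, ← pow_add]
        congr 1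
        ring
    _ = 0 := by rw [geom_sum_eq hne, hpow, sub_self, zero_div, mul_zero]

lemma rieszWeight_eq (k j : ℕ) :
    (rieszWeight k j : ℂ) = -rieszRoot k j / (k * (1 - rieszRoot k j) ^ 2) := by
  have hζ : rieszRoot k j ≠ 0 := exp_ne_zero _
  have hcos : cos (rieszNode k j : ℂ) = (rieszRoot k j + (rieszRoot k j)⁻¹) / 2 := by
    rw [cos, rieszRoot, ← exp_neg, neg_mul]
  have hden : 2 * k * (1 - cos (rieszNode k j : ℂ))
      = -(k * (1 - rieszRoot k j) ^ 2) / rieszRoot k j := by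
    rw [hcos]
    field_simp
    ring
  rw [rieszWeight]
  push_cast
  rw [hden, inv_div, div_neg, neg_div]

lemma sum_rieszRoot_pow_div_one_sub (hk : 0 < k) {r : ℕ} (hr₀ : 0 < r) (hr : r ≤ 2 * k) :
    ∑ j ∈ range (2 * k), rieszRoot k j ^ r / (1 - rieszRoot k j) = -k := by
  set U := ∑ j ∈ range (2 * k), (1 - rieszRoot k j)⁻¹
  -- `ζ ^ r / (1 - ζ) = 1 / (1 - ζ) - ∑ t < r, ζ ^ t`, and only `t = 0` survives the sum over `j`;
  -- at `r = 2k`, where `ζ ^ r = -1`, this pins down `U`.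
  have key : ∀ r', 0 < r' → r' ≤ 2 * k →
      ∑ j ∈ range (2 * k), rieszRoot k j ^ r' / (1 - rieszRoot k j) = U - 2 * k := by
    intro r' hr₀' hr'
    have hgeom : ∀ j, rieszRoot k j ^ r' / (1 - rieszRoot k j)
        = (1 - rieszRoot k j)⁻¹ - ∑ t ∈ range r', rieszRoot k j ^ t := by
      intro j
      have hζ₁ : 1 - rieszRoot k j ≠ 0 := sub_ne_zero.mpr (rieszRoot_ne_one hk j).symm
      have hmul := mul_neg_geom_sum (rieszRoot k j) r'
      field_simp
      linear_combination hmul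
    have hvanish : ∀ t ∈ range r', t ≠ 0 → ∑ j ∈ range (2 * k), rieszRoot k j ^ t = 0 :=
      fun t ht ht₀ => sum_rieszRoot_pow hk (Nat.pos_of_ne_zero ht₀) ((mem_range.mp ht).trans_le hr')
    rw [sum_congr rfl fun j _ => hgeom j, sum_sub_distrib, sum_comm,
      sum_eq_single_of_mem 0 (mem_range.mpr hr₀') hvanish]
    simp [U]
  have hU : U = k := by
    have h := key (2 * k) (by omega) le_rfl
    simp only [rieszRoot_pow_two_mul hk, neg_div, sum_neg_distrib, one_div] at h
    linear_combination -h / 2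
  rw [key r hr₀ hr, hU]
  ring

lemma sum_rieszWeight_mul_rieszRoot_pow {s : ℕ} (hs : s ≤ 2 * k) :
    ∑ j ∈ range (2 * k), (rieszWeight k j : ℂ) * rieszRoot k j ^ s = k - s := by
  rcases Nat.eq_zero_or_pos k with rfl | hk
  · obtain rfl : s = 0 := by omega
    simp
  set N : ℕ → ℂ := fun s => ∑ j ∈ range (2 * k), (rieszWeight k j : ℂ) * rieszRoot k j ^ s
  -- `N` drops by `1` at each step, and `ζ ^ (2k) = -1` forces `N (2k) = -N 0`.
  have hstep : ∀ s < 2 * k, N s - N (s + 1) = 1 := by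
    intro s hs
    have hterm : ∀ j, (rieszWeight k j : ℂ) * rieszRoot k j ^ s
        - rieszWeight k j * rieszRoot k j ^ (s + 1)
        = -(rieszRoot k j ^ (s + 1) / (1 - rieszRoot k j)) / k := by
      intro j
      have hζ₁ : 1 - rieszRoot k j ≠ 0 := sub_ne_zero.mpr (rieszRoot_ne_one hk j).symm
      rw [rieszWeight_eq]
      field_simp
      ring
    have hk' : (k : ℂ) ≠ 0 := by exact_mod_cast hk.ne'
    simp only [N]
    rw [← sum_sub_distrib, sum_congr rfl fun j _ => hterm j, ← sum_div, sum_neg_distrib,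
      sum_rieszRoot_pow_div_one_sub hk (by omega) (by omega), neg_neg, div_self hk']
  have hN : ∀ s ≤ 2 * k, N s = N 0 - s := by
    intro s
    induction s with
    | zero => simp
    | succ s ih =>
      intro hs
      push_cast
      linear_combination ih (by omega) - hstep s (by omega)
  have hN₀ : N 0 = k := by
    have h := hN (2 * k) le_rfl
    simp only [N, rieszRoot_pow_two_mul hk, mul_neg_one, sum_neg_distrib, pow_zero, mul_one] at h ⊢
    push_cast at h
    linear_combination -h / 2
  exact (hN s hs).trans (by rw [hN₀])

lemma abs_rieszCoeff (k j : ℕ) : |rieszCoeff k j| = rieszWeight k j := by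
  rw [rieszCoeff, abs_mul, abs_pow, abs_neg, abs_one, one_pow, one_mul, abs_of_nonneg]
  exact inv_nonneg.mpr (mul_nonneg (by positivity) (sub_nonneg.mpr (Real.cos_le_one _)))

lemma sum_abs_rieszCoeff (k : ℕ) : ∑ j ∈ range (2 * k), |rieszCoeff k j| = k := by
  have h := sum_rieszWeight_mul_rieszRoot_pow (k := k) (Nat.zero_le _)
  simp only [pow_zero, mul_one, Nat.cast_zero, sub_zero] at h
  simp only [abs_rieszCoeff]
  exact_mod_cast h

lemma sum_rieszCoeff_mul_exp {m : ℤ} (hm : |m| ≤ k) :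
    ∑ j ∈ range (2 * k), (rieszCoeff k j : ℂ) * exp (m * rieszNode k j * I) = m * I := by
  rcases Nat.eq_zero_or_pos k with rfl | hk
  · simp_all
  obtain ⟨hm₁, hm₂⟩ := abs_le.mp hm
  obtain ⟨s, hs⟩ : ∃ s : ℕ, (s : ℤ) = m + k := ⟨(m + k).toNat, Int.toNat_of_nonneg (by omega)⟩
  have hm' : (m : ℂ) = s - k := by
    rw [eq_sub_iff_add_eq]
    exact_mod_cast hs.symm
  have hterm : ∀ j, (rieszCoeff k j : ℂ) * exp (m * rieszNode k j * I)
      = -I * ((rieszWeight k j : ℂ) * rieszRoot k j ^ s) := by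
    intro j
    have hexp : exp (m * rieszNode k j * I) * rieszRoot k j ^ k = rieszRoot k j ^ s := by
      rw [rieszRoot, ← exp_nat_mul, ← exp_nat_mul, ← exp_add, hm']
      ring_nf
    have hsign : ((-1 : ℂ)) ^ j = -I * rieszRoot k j ^ k := by
      rw [rieszRoot_pow_self hk, ← mul_assoc, neg_mul, I_mul_I, neg_neg, one_mul]
    rw [rieszCoeff, ← hexp]
    push_cast
    rw [hsign]
    ring
  rw [sum_congr rfl fun j _ => hterm j, ← mul_sum, sum_rieszWeight_mul_rieszRoot_pow (by omega),
    hm']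
  ring

def trigPoly (k : ℕ) : Submodule ℂ (ℝ → ℂ) :=
  Submodule.span ℂ {p | ∃ m : ℤ, |m| ≤ k ∧ p = fun θ : ℝ => exp (m * θ * I)}

lemma trigPoly_mono : Monotone trigPoly := fun _ _ hab =>
  Submodule.span_mono fun _ ⟨m, hm, hp⟩ => ⟨m, hm.trans (by exact_mod_cast hab), hp⟩

lemma mul_mem_trigPoly {a b : ℕ} {p q : ℝ → ℂ} (hp : p ∈ trigPoly a) (hq : q ∈ trigPoly b) :
    p * q ∈ trigPoly (a + b) := by
  have h := Submodule.mul_mem_mul hp hq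
  rw [trigPoly, trigPoly, Submodule.span_mul_span] at h
  refine Submodule.span_mono ?_ h
  rintro _ ⟨_, ⟨m, hm, rfl⟩, _, ⟨m', hm', rfl⟩, rfl⟩
  refine ⟨m + m', (abs_add_le _ _).trans (by push_cast; linarith), ?_⟩
  funext θ
  simp only [Pi.mul_apply, ← exp_add, Int.cast_add]
  ring_nf

lemma one_mem_trigPoly_zero : (1 : ℝ → ℂ) ∈ trigPoly 0 :=
  Submodule.subset_span ⟨0, by simp, by funext; simp⟩

lemma sin_mul_add_cos_mul_mem_trigPoly_one (y z : ℝ) :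
    (fun θ : ℝ => ((Real.sin θ * y + Real.cos θ * z : ℝ) : ℂ)) ∈ trigPoly 1 := by
  have h₁ : (fun θ : ℝ => exp ((1 : ℤ) * θ * I)) ∈ trigPoly 1 :=
    Submodule.subset_span ⟨1, by simp, rfl⟩
  have h₂ : (fun θ : ℝ => exp ((-1 : ℤ) * θ * I)) ∈ trigPoly 1 :=
    Submodule.subset_span ⟨-1, by simp, rfl⟩
  convert Submodule.add_mem _ (Submodule.smul_mem _ ((z - y * I) / 2) h₁)
    (Submodule.smul_mem _ ((z + y * I) / 2) h₂) using 1
  funext θ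
  simp only [Pi.add_apply, Pi.smul_apply, smul_eq_mul, Complex.ofReal_add, Complex.ofReal_mul,
    Complex.ofReal_sin, Complex.ofReal_cos, Complex.sin, Complex.cos]
  push_cast
  ring_nf

lemma prod_mem_trigPoly {ι : Type*} (S : Finset ι) {f : ι → ℝ → ℂ}
    (hf : ∀ i ∈ S, f i ∈ trigPoly 1) : ∏ i ∈ S, f i ∈ trigPoly #S := by
  classical
  induction S using Finset.induction_on with
  | empty => simpa using one_mem_trigPoly_zero
  | insert i S hi ih =>
    rw [prod_insert hi, card_insert_of_notMem hi, add_comm]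
    exact mul_mem_trigPoly (hf i (mem_insert_self _ _)) (ih fun i h => hf i (mem_insert_of_mem h))

/-- M. Riesz's interpolation formula. -/
theorem hasDerivAt_zero_of_mem_trigPoly {p : ℝ → ℂ} (hp : p ∈ trigPoly k) :
    HasDerivAt p (∑ j ∈ range (2 * k), (rieszCoeff k j : ℂ) * p (rieszNode k j)) 0 := by
  induction hp using Submodule.span_induction with
  | mem p hp =>
    obtain ⟨m, hm, rfl⟩ := hp
    rw [sum_rieszCoeff_mul_exp hm]
    simpa using (((hasDerivAt_id (0 : ℝ)).ofReal_comp.const_mul (m : ℂ)).mul_const I).cexp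
  | zero => simp
  | add p q _ _ hp hq => simpa [mul_add, sum_add_distrib] using hp.add hq
  | smul c p _ hp =>
    refine (hp.const_mul c).congr_deriv ?_
    rw [mul_sum]
    exact sum_congr rfl fun j _ => mul_left_comm _ _ _

lemma sum_rieszCoeff_mul_prod {ι : Type*} [DecidableEq ι] {S : Finset ι} (hS : #S ≤ k)
    (y z : ι → ℝ) :
    ∑ j ∈ range (2 * k), rieszCoeff k j *
        ∏ i ∈ S, (Real.sin (rieszNode k j) * y i + Real.cos (rieszNode k j) * z i)
      = ∑ i ∈ S, y i * ∏ l ∈ S.erase i, z l := by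
  set F : ℝ → ℝ := fun θ => ∏ i ∈ S, (Real.sin θ * y i + Real.cos θ * z i)
  have hF : HasDerivAt F (∑ i ∈ S, y i * ∏ l ∈ S.erase i, z l) 0 := by
    refine (HasDerivAt.fun_finsetProd (x := 0) (f' := y) fun i _ =>
      (((Real.hasDerivAt_sin 0).mul_const (y i)).fun_add
        ((Real.hasDerivAt_cos 0).mul_const (z i))).congr_deriv ?_).congr_deriv ?_
    · simp
    · simp [mul_comm]
  have hmem : (fun θ => (F θ : ℂ)) ∈ trigPoly k := by
    refine trigPoly_mono hS ?_
    convert prod_mem_trigPoly S fun i _ => sin_mul_add_cos_mul_mem_trigPoly_one (y i) (z i) using 1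
    funext θ
    simp [F, Finset.prod_apply]
  exact_mod_cast (hasDerivAt_zero_of_mem_trigPoly hmem).unique hF.ofReal_comp

section Polynomial

variable {n : ℕ} {E : Type*} [NormedAddCommGroup E] [NormedSpace ℝ E] {a : Finset (Fin n) → E}

lemma odecE_eq_sum_rieszCoeff_smul (ha : ∀ S : Finset (Fin n), k < #S → a S = 0)
    (y z : Fin n → ℝ) :
    odecE a y z = ∑ j ∈ range (2 * k), rieszCoeff k j •
      evalPolyE a (Real.sin (rieszNode k j) • y + Real.cos (rieszNode k j) • z) := by
  simp only [odecE, evalPolyE, smul_sum, smul_smul]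
  rw [sum_comm]
  refine sum_congr rfl fun S _ => ?_
  rw [← sum_smul]
  by_cases hS : k < #S
  · simp [ha S hS]
  · simp [← sum_rieszCoeff_mul_prod (not_lt.mp hS)]

lemma norm_odecE_le (ha : ∀ S : Finset (Fin n), k < #S → a S = 0) {y z : Fin n → ℝ} {t : ℝ}
    (h : ∀ j ∈ range (2 * k),
      ‖evalPolyE a (Real.sin (rieszNode k j) • y + Real.cos (rieszNode k j) • z)‖ ≤ t) :
    ‖odecE a y z‖ ≤ k * t := by
  rw [odecE_eq_sum_rieszCoeff_smul ha]
  calc _ ≤ ∑ j ∈ range (2 * k), |rieszCoeff k j| * t := by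
        refine (norm_sum_le _ _).trans (sum_le_sum fun j hj => ?_)
        rw [norm_smul, Real.norm_eq_abs]
        exact mul_le_mul_of_nonneg_left (h j hj) (abs_nonneg _)
    _ = k * t := by rw [← sum_mul, sum_abs_rieszCoeff]

lemma continuous_evalPolyE (a : Finset (Fin n) → E) : Continuous (evalPolyE a) := by
  unfold evalPolyE
  fun_prop

end Polynomial

lemma measurePreserving_mul_add_mul_gaussianReal {s c : ℝ} (h : s ^ 2 + c ^ 2 = 1) :
    MeasurePreserving (fun q : ℝ × ℝ => s * q.1 + c * q.2)
      ((gaussianReal 0 1).prod (gaussianReal 0 1)) (gaussianReal 0 1) := by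
  refine ⟨by fun_prop, ?_⟩
  have hcomp : (fun q : ℝ × ℝ => s * q.1 + c * q.2)
      = (fun q : ℝ × ℝ => q.1 + q.2) ∘ Prod.map (s * ·) (c * ·) := rfl
  rw [hcomp, ← Measure.map_map (by fun_prop) (by fun_prop),
    ← Measure.map_prod_map _ _ (by fun_prop) (by fun_prop), gaussianReal_map_const_mul,
    gaussianReal_map_const_mul]
  change gaussianReal _ _ ∗ gaussianReal _ _ = _
  rw [gaussianReal_conv_gaussianReal]
  congr 1
  · simp
  · ext
    simp [h]

lemma measurePreserving_smul_add_smul_gaussPi (n : ℕ) {s c : ℝ} (h : s ^ 2 + c ^ 2 = 1) :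
    MeasurePreserving (fun p : (Fin n → ℝ) × (Fin n → ℝ) => s • p.1 + c • p.2)
      ((gaussPi n).prod (gaussPi n)) (gaussPi n) :=
  (measurePreserving_pi _ _ fun _ => measurePreserving_mul_add_mul_gaussianReal h).comp
    (measurePreserving_arrowProdEquivProdArrow ℝ ℝ (Fin n) _ _).symm

end Decoupling

open Decoupling in
theorem stmt4 :
    ∃ C : ℝ, 0 < C ∧
      ∀ (n k : ℕ) (E : Type) [NormedAddCommGroup E] [NormedSpace ℝ E] [CompleteSpace E]
        [SecondCountableTopology E] (a : Finset (Fin n) → E),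
        (∀ S : Finset (Fin n), k < S.card → a S = 0) →
        ∀ t : ℝ, 0 < t →
          ((gaussPi n).prod (gaussPi n)) {p | C * k * t < ‖odecE a p.1 p.2‖}
            ≤ ENNReal.ofReal (C * k) * (gaussPi n) {x | t < ‖evalPolyE a x‖} := by
  refine ⟨2, two_pos, fun n k E _ _ _ _ a ha t ht => ?_⟩
  set B := {x | t < ‖evalPolyE a x‖}
  set rot : ℕ → (Fin n → ℝ) × (Fin n → ℝ) → (Fin n → ℝ) := fun j p =>
    Real.sin (rieszNode k j) • p.1 + Real.cos (rieszNode k j) • p.2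
  have hB : MeasurableSet B :=
    (isOpen_lt continuous_const (continuous_evalPolyE a).norm).measurableSet
  have hsub : {p | 2 * k * t < ‖odecE a p.1 p.2‖} ⊆ ⋃ j ∈ range (2 * k), rot j ⁻¹' B := by
    intro p hp
    by_contra hp'
    simp only [Set.mem_iUnion, Set.mem_preimage, not_exists, B, Set.mem_ofPred_eq, not_lt] at hp'
    have hle := norm_odecE_le ha hp'
    have hkt : 0 ≤ (k : ℝ) * t := by positivity
    rw [Set.mem_ofPred_eq] at hp
    linarith
  calc ((gaussPi n).prod (gaussPi n)) {p | 2 * k * t < ‖odecE a p.1 p.2‖}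
      ≤ ∑ j ∈ range (2 * k), ((gaussPi n).prod (gaussPi n)) (rot j ⁻¹' B) :=
        (measure_mono hsub).trans (measure_biUnion_finset_le _ _)
    _ = ∑ j ∈ range (2 * k), gaussPi n B := sum_congr rfl fun j _ =>
        (measurePreserving_smul_add_smul_gaussPi n (Real.sin_sq_add_cos_sq _)).measure_preimage
          hB.nullMeasurableSet
    _ = ENNReal.ofReal (2 * k) * gaussPi n B := by
        rw [sum_const, card_range, nsmul_eq_mul, ← ENNReal.ofReal_natCast]
        push_cast
        rfl
end

section
/- There is a universal constant C such that the following holds. Let f : {-1,+1}^n → ℝ be given by a multilinear polynomial of degree at most k, f(x) = ∑_{|S| ≤ k} a_S ∏_{i∈S} x_i, with real coefficients. Then the one-block decoupled version satisfies sup_{y,z ∈ {-1,+1}^n} |f˘(y,z)| ≤ C·k² · sup_{x ∈ {-1,+1}^n} |f(x)|. -/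
open Finset

/-- The ±1 value corresponding to a Boolean. -/
noncomputable def pm (b : Bool) : ℝ := if b then 1 else -1

open Polynomial

-- Chebyshev facts
lemma U_eval_one' : ∀ n : ℕ, (Polynomial.Chebyshev.U ℝ (n : ℤ)).eval 1 = (n : ℝ) + 1 := by
  have H : ∀ n : ℕ, (Polynomial.Chebyshev.U ℝ (n : ℤ)).eval 1 = (n : ℝ) + 1 ∧
      (Polynomial.Chebyshev.U ℝ ((n : ℤ) + 1)).eval 1 = (n : ℝ) + 2 := by
    intro n
    induction n with
    | zero => norm_num [Polynomial.Chebyshev.U_zero, Polynomial.Chebyshev.U_one]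
    | succ m ih =>
      constructor
      · push_cast
        have := ih.2
        push_cast at this
        linarith [this]
      · have h2 := Polynomial.Chebyshev.U_add_two ℝ (m : ℤ)
        have : ((m+1 : ℕ) : ℤ) + 1 = (m : ℤ) + 2 := by push_cast; ring
        rw [this, h2]
        simp only [Polynomial.eval_sub, Polynomial.eval_mul, Polynomial.eval_ofNat,
          Polynomial.eval_X]
        have h0 := ih.1
        have h1 := ih.2
        push_cast
        push_cast at h0 h1
        rw [h0, h1]; ring
  exact fun n => (H n).1

lemma T_degree_lt (n : ℕ) : (Polynomial.Chebyshev.T ℝ (n : ℤ)).degree < ((n+1 : ℕ) : WithBot ℕ) := by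
  have H : ∀ n : ℕ, (Polynomial.Chebyshev.T ℝ (n : ℤ)).degree ≤ (n : WithBot ℕ) ∧
      (Polynomial.Chebyshev.T ℝ ((n : ℤ) + 1)).degree ≤ ((n+1 : ℕ) : WithBot ℕ) := by
    intro n
    induction n with
    | zero =>
      constructor
      · simpa [Polynomial.Chebyshev.T_zero] using Polynomial.degree_one_le
      · simpa [Polynomial.Chebyshev.T_one] using Polynomial.degree_X_le
    | succ m ih =>
      constructor
      · have : ((m+1 : ℕ) : ℤ) = (m : ℤ) + 1 := by push_cast; ring
        rw [this]
        exact ih.2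
      · have h2 := Polynomial.Chebyshev.T_add_two ℝ (m : ℤ)
        have : ((m+1 : ℕ) : ℤ) + 1 = (m : ℤ) + 2 := by push_cast; ring
        rw [this, h2]
        refine le_trans (Polynomial.degree_sub_le _ _) ?_
        rw [max_le_iff]
        constructor
        · refine le_trans (Polynomial.degree_mul_le _ _) ?_
          have h2d : ((2 : Polynomial ℝ)).degree ≤ 0 := by
            rw [show (2 : Polynomial ℝ) = Polynomial.C 2 from (map_ofNat Polynomial.C 2).symm]
            exact Polynomial.degree_C_le
          have hX : (2 * Polynomial.X : Polynomial ℝ).degree ≤ 1 := by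
            refine le_trans (Polynomial.degree_mul_le _ _) ?_
            calc Polynomial.degree (2 : Polynomial ℝ) + Polynomial.degree (Polynomial.X : Polynomial ℝ)
                ≤ 0 + 1 := add_le_add h2d Polynomial.degree_X_le
              _ = 1 := by norm_num
          calc (2 * Polynomial.X : Polynomial ℝ).degree +
                (Polynomial.Chebyshev.T ℝ ((m:ℤ)+1)).degree
              ≤ 1 + ((m+1 : ℕ) : WithBot ℕ) := add_le_add hX ih.2
            _ ≤ ((m+1+1 : ℕ) : WithBot ℕ) := by
                rw [show ((m+1+1 : ℕ) : WithBot ℕ) = 1 + ((m+1:ℕ) : WithBot ℕ) by push_cast; ring]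
        · refine le_trans ih.1 ?_
          exact_mod_cast WithBot.coe_le_coe.mpr (by omega)
  exact lt_of_le_of_lt (H n).1 (by exact_mod_cast WithBot.coe_lt_coe.mpr (by omega))

lemma T_deriv_one (k : ℕ) (hk : 1 ≤ k) :
    (Polynomial.derivative (Polynomial.Chebyshev.T ℝ (k : ℤ))).eval 1 = (k : ℝ)^2 := by
  obtain ⟨m, rfl⟩ : ∃ m, k = m + 1 := ⟨k - 1, by omega⟩
  rw [Polynomial.Chebyshev.T_derivative_eq_U]
  have : ((m+1 : ℕ) : ℤ) - 1 = (m : ℤ) := by push_cast; ring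
  rw [this]
  simp only [Polynomial.eval_mul, Polynomial.eval_intCast]
  rw [U_eval_one' m]
  push_cast
  ring

lemma polyDerivFinsetProd {ι : Type*} [DecidableEq ι] (s : Finset ι) (f : ι → Polynomial ℝ) :
    Polynomial.derivative (∏ i ∈ s, f i)
      = ∑ i ∈ s, (∏ j ∈ s.erase i, f j) * Polynomial.derivative (f i) := by
  induction s using Finset.induction with
  | empty => simp
  | @insert i s his ih =>
    rw [Finset.prod_insert his, Polynomial.derivative_mul, Finset.sum_insert his,
      Finset.erase_insert his, ih, Finset.mul_sum]
    congr 1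
    · exact mul_comm _ _
    · apply Finset.sum_congr rfl
      intro j hj
      have hji : j ≠ i := fun h => his (h ▸ hj)
      have hi' : i ∉ s.erase j := fun h => his (Finset.mem_of_mem_erase h)
      rw [Finset.erase_insert_of_ne hji.symm, Finset.prod_insert hi']
      ring

open Real in
lemma markov_endpoint (k : ℕ) (hk : 1 ≤ k) (p : Polynomial ℝ)
    (hdeg : p.degree < ((k+1 : ℕ) : WithBot ℕ)) (M : ℝ)
    (hb : ∀ s : ℝ, |s| ≤ 1 → |p.eval s| ≤ M) :
    |(Polynomial.derivative p).eval 1| ≤ (k : ℝ)^2 * M := by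
  classical
  have hkR : (0:ℝ) < k := by positivity
  set θ : Fin (k+1) → ℝ := fun j => (j : ℕ) * π / k with hθdef
  set ξ : Fin (k+1) → ℝ := fun j => Real.cos (θ j) with hξdef
  have hθmem : ∀ j : Fin (k+1), θ j ∈ Set.Icc 0 π := by
    intro j
    constructor
    · positivity
    · rw [hθdef]
      rw [div_le_iff₀ hkR]
      have hj : ((j:ℕ):ℝ) ≤ (k:ℝ) := by exact_mod_cast Nat.le_of_lt_succ j.isLt
      nlinarith [Real.pi_pos]
  have hθmono : ∀ {i j : Fin (k+1)}, i < j → θ i < θ j := by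
    intro i j hij
    have : ((i:ℕ):ℝ) < ((j:ℕ):ℝ) := by exact_mod_cast hij
    have := Real.pi_pos
    rw [hθdef]
    exact div_lt_div_of_pos_right (by nlinarith) hkR
  have hanti : ∀ {i j : Fin (k+1)}, i < j → ξ j < ξ i := by
    intro i j hij
    exact Real.strictAntiOn_cos (hθmem i) (hθmem j) (hθmono hij)
  have hinj : Set.InjOn ξ ↑(univ : Finset (Fin (k+1))) := by
    intro i _ j _ h
    rcases lt_trichotomy i j with hij | hij | hij
    · exact absurd h (hanti hij).ne'
    · exact hij
    · exact absurd h (hanti hij).ne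
  have hξle : ∀ j, |ξ j| ≤ 1 := fun j => Real.abs_cos_le_one _
  have hξlt1 : ∀ j, ξ j ≤ 1 := fun j => Real.cos_le_one _
  -- T evaluates to (-1)^j at nodes
  have hTeval : ∀ j : Fin (k+1), (Polynomial.Chebyshev.T ℝ (k:ℤ)).eval (ξ j) = (-1)^(j:ℕ) := by
    intro j
    rw [hξdef]
    simp only []
    rw [Polynomial.Chebyshev.T_real_cos]
    have harg : ((k:ℤ):ℝ) * θ j = (j:ℕ) * π := by
      rw [hθdef]
      push_cast
      field_simp
    rw [harg]
    have := Real.cos_nat_mul_pi_sub 0 (j:ℕ)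
    simpa using this
  -- basis decomposition
  set D : Fin (k+1) → ℝ := fun j => ∏ m ∈ univ.erase j, (ξ j - ξ m) with hDdef
  set N : Fin (k+1) → Polynomial ℝ :=
    fun j => ∏ m ∈ univ.erase j, (Polynomial.X - Polynomial.C (ξ m)) with hNdef
  have hDne : ∀ j, D j ≠ 0 := by
    intro j
    rw [hDdef]
    refine Finset.prod_ne_zero_iff.mpr ?_
    intro m hm
    have hmj : m ≠ j := (Finset.mem_erase.mp hm).1
    have := hinj (Finset.mem_coe.mpr (mem_univ j)) (Finset.mem_coe.mpr (mem_univ m))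
    intro hzero
    exact hmj (this (by linarith)).symm
  have hbasis : ∀ j, Lagrange.basis univ ξ j = Polynomial.C (D j)⁻¹ * N j := by
    intro j
    rw [Lagrange.basis, hNdef, hDdef]
    simp only [Lagrange.basisDivisor]
    rw [Finset.prod_mul_distrib, ← map_prod, Finset.prod_inv_distrib]
  set ν : Fin (k+1) → ℝ := fun j => (Polynomial.derivative (N j)).eval 1 with hνdef
  have hν_nonneg : ∀ j, 0 ≤ ν j := by
    intro j
    rw [hνdef, hNdef]
    simp only [polyDerivFinsetProd, Polynomial.derivative_sub, Polynomial.derivative_X,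
      Polynomial.derivative_C, sub_zero, mul_one, Polynomial.eval_finset_sum]
    apply Finset.sum_nonneg
    intro m hm
    rw [Polynomial.eval_prod]
    apply Finset.prod_nonneg
    intro m' hm'
    simp only [Polynomial.eval_sub, Polynomial.eval_X, Polynomial.eval_C]
    linarith [hξlt1 m']
  set c : Fin (k+1) → ℝ := fun j => (Polynomial.derivative (Lagrange.basis univ ξ j)).eval 1
    with hcdef
  have hc : ∀ j, c j = (D j)⁻¹ * ν j := by
    intro j
    rw [hcdef, hνdef]
    simp only [hbasis, Polynomial.derivative_C_mul, Polynomial.eval_mul, Polynomial.eval_C]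
  -- sign of D j
  have hsign : ∀ j : Fin (k+1), 0 < (-1:ℝ)^(j:ℕ) * D j := by
    intro j
    have hsplit : univ.erase j = Finset.Iio j ∪ Finset.Ioi j := by
      ext m
      simp only [Finset.mem_erase, Finset.mem_univ, and_true, Finset.mem_union,
        Finset.mem_Iio, Finset.mem_Ioi]
      exact ne_iff_lt_or_gt
    have hdisj : Disjoint (Finset.Iio j) (Finset.Ioi j) := by
      rw [Finset.disjoint_left]
      intro m hm hm'
      exact absurd (Finset.mem_Ioi.mp hm') (not_lt_of_gt (Finset.mem_Iio.mp hm))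
    rw [hDdef]
    simp only []
    rw [hsplit, Finset.prod_union hdisj]
    have h1 : ∏ m ∈ Finset.Iio j, (ξ j - ξ m)
        = (-1:ℝ)^(j:ℕ) * ∏ m ∈ Finset.Iio j, (ξ m - ξ j) := by
      have hcongr : ∀ m ∈ Finset.Iio j, ξ j - ξ m = (-1) * (ξ m - ξ j) := fun m _ => by ring
      rw [Finset.prod_congr rfl hcongr, Finset.prod_mul_distrib, Finset.prod_const, Fin.card_Iio]
    rw [h1]
    have hpos1 : 0 < ∏ m ∈ Finset.Iio j, (ξ m - ξ j) := by
      apply Finset.prod_pos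
      intro m hm
      have := hanti (Finset.mem_Iio.mp hm)
      linarith
    have hpos2 : 0 < ∏ m ∈ Finset.Ioi j, (ξ j - ξ m) := by
      apply Finset.prod_pos
      intro m hm
      have := hanti (Finset.mem_Ioi.mp hm)
      linarith
    have hsq : (-1:ℝ)^(j:ℕ) * (-1:ℝ)^(j:ℕ) = 1 := by
      rw [← pow_add, ← two_mul, pow_mul]
      norm_num
    calc (0:ℝ) < (∏ m ∈ Finset.Iio j, (ξ m - ξ j)) * ∏ m ∈ Finset.Ioi j, (ξ j - ξ m) :=
          mul_pos hpos1 hpos2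
      _ = (-1:ℝ)^(j:ℕ) * ((-1:ℝ)^(j:ℕ) * (∏ m ∈ Finset.Iio j, (ξ m - ξ j)) *
            ∏ m ∈ Finset.Ioi j, (ξ j - ξ m)) := by
          rw [show ∀ x y : ℝ, (-1:ℝ)^(j:ℕ) * ((-1:ℝ)^(j:ℕ) * x * y) =
            ((-1:ℝ)^(j:ℕ) * (-1:ℝ)^(j:ℕ)) * (x * y) from fun x y => by ring, hsq, one_mul]
  have hcsign : ∀ j : Fin (k+1), 0 ≤ (-1:ℝ)^(j:ℕ) * c j := by
    intro j
    rw [hc]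
    have : (-1:ℝ)^(j:ℕ) * ((D j)⁻¹ * ν j) = ((-1:ℝ)^(j:ℕ) * D j)⁻¹ * ν j := by
      rw [mul_inv]
      have : ((-1:ℝ)^(j:ℕ))⁻¹ = (-1:ℝ)^(j:ℕ) := by
        rcases Nat.even_or_odd (j:ℕ) with h | h
        · rw [h.neg_one_pow]; norm_num
        · rw [h.neg_one_pow]; norm_num
      rw [this]; ring
    rw [this]
    exact mul_nonneg (inv_nonneg.mpr (le_of_lt (hsign j))) (hν_nonneg j)
  have habs : ∀ j : Fin (k+1), |c j| = (-1:ℝ)^(j:ℕ) * c j := by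
    intro j
    have h1 : |(-1:ℝ)^(j:ℕ) * c j| = |c j| := by
      rw [abs_mul, abs_pow, abs_neg, abs_one, one_pow, one_mul]
    rw [← h1, abs_of_nonneg (hcsign j)]
  -- interpolation identities
  have hcard : ((k+1 : ℕ) : WithBot ℕ) = ((univ : Finset (Fin (k+1))).card : WithBot ℕ) := by
    rw [Finset.card_univ, Fintype.card_fin]
  have hp : p = ∑ j : Fin (k+1), Polynomial.C (p.eval (ξ j)) * Lagrange.basis univ ξ j := by
    have h := Lagrange.eq_interpolate hinj (by rw [← hcard]; exact hdeg)
    rw [Lagrange.interpolate_apply] at h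
    exact h
  have hT : Polynomial.Chebyshev.T ℝ (k:ℤ)
      = ∑ j : Fin (k+1), Polynomial.C ((-1:ℝ)^(j:ℕ)) * Lagrange.basis univ ξ j := by
    have h := Lagrange.eq_interpolate_of_eval_eq (r := fun j : Fin (k+1) => (-1:ℝ)^(j:ℕ)) hinj
      (by rw [← hcard]; exact T_degree_lt k) (fun j _ => hTeval j)
    rw [Lagrange.interpolate_apply] at h
    exact h
  have hderiv_sum : ∀ (g : Fin (k+1) → ℝ),
      (Polynomial.derivative (∑ j : Fin (k+1), Polynomial.C (g j) * Lagrange.basis univ ξ j)).eval 1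
        = ∑ j : Fin (k+1), g j * c j := by
    intro g
    rw [map_sum, Polynomial.eval_finset_sum]
    apply Finset.sum_congr rfl
    intro j _
    rw [Polynomial.derivative_C_mul, Polynomial.eval_mul, Polynomial.eval_C, hcdef]
  have hTsum : ∑ j : Fin (k+1), (-1:ℝ)^(j:ℕ) * c j = (k:ℝ)^2 := by
    rw [← hderiv_sum (fun j => (-1:ℝ)^(j:ℕ)), ← hT, T_deriv_one k hk]
  have hpsum : (Polynomial.derivative p).eval 1 = ∑ j : Fin (k+1), p.eval (ξ j) * c j := by
    conv_lhs => rw [hp]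
    exact hderiv_sum _
  rw [hpsum]
  calc |∑ j : Fin (k+1), p.eval (ξ j) * c j| ≤ ∑ j : Fin (k+1), |p.eval (ξ j) * c j| :=
        Finset.abs_sum_le_sum_abs _ _
    _ ≤ ∑ j : Fin (k+1), M * |c j| := by
        apply Finset.sum_le_sum
        intro j _
        rw [abs_mul]
        exact mul_le_mul_of_nonneg_right (hb _ (hξle j)) (abs_nonneg _)
    _ = M * ∑ j : Fin (k+1), (-1:ℝ)^(j:ℕ) * c j := by
        rw [Finset.mul_sum]
        apply Finset.sum_congr rfl
        intro j _
        rw [habs j]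
    _ = (k:ℝ)^2 * M := by rw [hTsum]; ring


lemma pm_abs (b : Bool) : |pm b| = 1 := by cases b <;> norm_num [pm]
lemma pm_sq (b : Bool) : pm b * pm b = 1 := by cases b <;> norm_num [pm]
lemma pm_mul_ne {b b' : Bool} (h : b ≠ b') : pm b * pm b' = -1 := by
  cases b <;> cases b' <;> simp_all [pm]

lemma evalPoly_update {n : ℕ} (a : Finset (Fin n) → ℝ) (x : Fin n → ℝ) (i : Fin n) (c : ℝ) :
    evalPoly a (Function.update x i c)
      = (∑ S ∈ univ.filter (fun S : Finset (Fin n) => i ∉ S), a S * ∏ j ∈ S, x j)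
        + c * ∑ S ∈ univ.filter (fun S : Finset (Fin n) => i ∈ S),
            a S * ∏ j ∈ S.erase i, x j := by
  classical
  rw [evalPoly]
  rw [← Finset.sum_filter_add_sum_filter_not univ (fun S : Finset (Fin n) => i ∉ S)]
  congr 1
  · apply Finset.sum_congr rfl
    intro S hS
    have hiS : i ∉ S := (Finset.mem_filter.mp hS).2
    congr 1
    apply Finset.prod_congr rfl
    intro j hj
    exact Function.update_of_ne (fun h => hiS (by rw [← h]; exact hj)) _ _
  · rw [Finset.mul_sum]
    have hfil : univ.filter (fun S : Finset (Fin n) => ¬ i ∉ S)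
        = univ.filter (fun S : Finset (Fin n) => i ∈ S) := by
      apply Finset.filter_congr; intro S _; simp
    rw [hfil]
    apply Finset.sum_congr rfl
    intro S hS
    have hiS : i ∈ S := (Finset.mem_filter.mp hS).2
    have hprod : ∏ j ∈ S, Function.update x i c j = c * ∏ j ∈ S.erase i, x j := by
      rw [← Finset.mul_prod_erase S _ hiS, Function.update_self]
      congr 1
      apply Finset.prod_congr rfl
      intro j hj
      exact Function.update_of_ne (Finset.ne_of_mem_erase hj) _ _
    rw [hprod]; ring

lemma evalPoly_convex {n : ℕ} (a : Finset (Fin n) → ℝ) (x : Fin n → ℝ) (i : Fin n) :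
    evalPoly a x = ((1 + x i)/2) * evalPoly a (Function.update x i 1)
      + ((1 - x i)/2) * evalPoly a (Function.update x i (-1)) := by
  have h := fun c => evalPoly_update a x i c
  have hx : evalPoly a x = evalPoly a (Function.update x i (x i)) := by
    rw [Function.update_eq_self]
  rw [hx, h (x i), h 1, h (-1)]; ring

lemma cube_bound {n : ℕ} (a : Finset (Fin n) → ℝ) (M : ℝ)
    (hM : ∀ x : Fin n → Bool, |evalPoly a (fun i => pm (x i))| ≤ M) :
    ∀ (F : Finset (Fin n)) (x : Fin n → ℝ), (∀ i, |x i| ≤ 1) →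
      (∀ i ∉ F, x i = 1 ∨ x i = -1) → |evalPoly a x| ≤ M := by
  classical
  intro F
  induction F using Finset.induction with
  | empty =>
    intro x hx hb
    set b : Fin n → Bool := fun i => decide (x i = 1) with hbdef
    have hxb : (fun i => pm (b i)) = x := by
      funext i
      rcases hb i (Finset.notMem_empty i) with h | h
      · simp [hbdef, pm, h]
      · have hne : ¬ (x i = 1) := by rw [h]; norm_num
        have hd : decide (x i = 1) = false := decide_eq_false hne
        simp only [hbdef, hd, pm, if_false, Bool.false_eq_true]
        exact h.symm
    rw [← hxb]
    exact hM b
  | @insert i F his ih =>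
    intro x hx hb
    have h1 : |evalPoly a (Function.update x i 1)| ≤ M := by
      apply ih
      · intro j
        rcases eq_or_ne j i with rfl | hji
        · simp
        · rw [Function.update_of_ne hji]; exact hx j
      · intro j hj
        rcases eq_or_ne j i with rfl | hji
        · simp
        · rw [Function.update_of_ne hji]
          exact hb j (fun h => hj (by
            rcases Finset.mem_insert.mp h with h' | h'
            · exact absurd h' hji
            · exact h'))
    have h2 : |evalPoly a (Function.update x i (-1))| ≤ M := by
      apply ih
      · intro j
        rcases eq_or_ne j i with rfl | hji
        · simp
        · rw [Function.update_of_ne hji]; exact hx j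
      · intro j hj
        rcases eq_or_ne j i with rfl | hji
        · simp
        · rw [Function.update_of_ne hji]
          exact hb j (fun h => hj (by
            rcases Finset.mem_insert.mp h with h' | h'
            · exact absurd h' hji
            · exact h'))
    rw [evalPoly_convex a x i]
    have hxi := hx i
    have hc1 : (0:ℝ) ≤ (1 + x i)/2 := by
      have := abs_le.mp hxi
      linarith [this.1]
    have hc2 : (0:ℝ) ≤ (1 - x i)/2 := by
      have := abs_le.mp hxi
      linarith [this.2]
    calc |((1 + x i)/2) * evalPoly a (Function.update x i 1)
          + ((1 - x i)/2) * evalPoly a (Function.update x i (-1))|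
        ≤ |((1 + x i)/2) * evalPoly a (Function.update x i 1)|
          + |((1 - x i)/2) * evalPoly a (Function.update x i (-1))| := abs_add_le _ _
      _ = ((1 + x i)/2) * |evalPoly a (Function.update x i 1)|
          + ((1 - x i)/2) * |evalPoly a (Function.update x i (-1))| := by
          rw [abs_mul, abs_mul, abs_of_nonneg hc1, abs_of_nonneg hc2]
      _ ≤ ((1 + x i)/2) * M + ((1 - x i)/2) * M :=
          add_le_add (mul_le_mul_of_nonneg_left h1 hc1) (mul_le_mul_of_nonneg_left h2 hc2)
      _ = M := by ring

lemma cube_bound' {n : ℕ} (a : Finset (Fin n) → ℝ) (M : ℝ)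
    (hM : ∀ x : Fin n → Bool, |evalPoly a (fun i => pm (x i))| ≤ M)
    (x : Fin n → ℝ) (hx : ∀ i, |x i| ≤ 1) : |evalPoly a x| ≤ M :=
  cube_bound a M hM univ x hx (fun i hi => absurd (mem_univ i) hi)

noncomputable def chi {n : ℕ} (z : Fin n → Bool) (S : Finset (Fin n)) : ℝ :=
  ∏ i ∈ S, pm (z i)

noncomputable def dirPoly {n : ℕ} (a : Finset (Fin n) → ℝ) (z : Fin n → Bool)
    (Q : Finset (Fin n)) : Polynomial ℝ :=
  ∑ S : Finset (Fin n), Polynomial.C (a S * chi z S) * Polynomial.X ^ (S ∩ Q).card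

lemma dirPoly_degree {n k : ℕ} (a : Finset (Fin n) → ℝ)
    (ha : ∀ S : Finset (Fin n), k < S.card → a S = 0) (z : Fin n → Bool)
    (Q : Finset (Fin n)) : (dirPoly a z Q).degree < ((k+1 : ℕ) : WithBot ℕ) := by
  classical
  rw [dirPoly]
  refine lt_of_le_of_lt (Polynomial.degree_sum_le _ _) ?_
  rw [Finset.sup_lt_iff (by exact WithBot.bot_lt_coe _)]
  intro S _
  by_cases hS : k < S.card
  · rw [ha S hS]
    simp only [zero_mul, map_zero, Polynomial.degree_zero]
    exact WithBot.bot_lt_coe _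
  · refine lt_of_le_of_lt (Polynomial.degree_C_mul_X_pow_le _ _) ?_
    have h1 : (S ∩ Q).card ≤ k := le_trans (Finset.card_le_card Finset.inter_subset_left)
      (not_lt.mp hS)
    exact_mod_cast Nat.lt_succ_of_le h1

lemma dirPoly_eval {n : ℕ} (a : Finset (Fin n) → ℝ) (z : Fin n → Bool)
    (Q : Finset (Fin n)) (s : ℝ) :
    (dirPoly a z Q).eval s
      = evalPoly a (fun i => if i ∈ Q then s * pm (z i) else pm (z i)) := by
  classical
  rw [dirPoly, Polynomial.eval_finset_sum, evalPoly]
  apply Finset.sum_congr rfl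
  intro S _
  rw [Polynomial.eval_mul, Polynomial.eval_C, Polynomial.eval_pow, Polynomial.eval_X]
  have hsplit := Finset.prod_inter_mul_prod_diff S Q
    (fun i => if i ∈ Q then s * pm (z i) else pm (z i))
  rw [← hsplit]
  have h1 : ∏ i ∈ S ∩ Q, (if i ∈ Q then s * pm (z i) else pm (z i))
      = s ^ (S ∩ Q).card * ∏ i ∈ S ∩ Q, pm (z i) := by
    rw [Finset.prod_congr rfl (fun i hi => if_pos (Finset.mem_of_mem_inter_right hi)),
      Finset.prod_mul_distrib, Finset.prod_const]
  have h2 : ∏ i ∈ S \ Q, (if i ∈ Q then s * pm (z i) else pm (z i))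
      = ∏ i ∈ S \ Q, pm (z i) := by
    apply Finset.prod_congr rfl
    intro i hi
    exact if_neg (Finset.mem_sdiff.mp hi).2
  rw [h1, h2]
  have hchi : chi z S = (∏ i ∈ S ∩ Q, pm (z i)) * ∏ i ∈ S \ Q, pm (z i) :=
    (Finset.prod_inter_mul_prod_diff S Q (fun i => pm (z i))).symm
  rw [hchi]
  ring

lemma dirPoly_deriv_one {n : ℕ} (a : Finset (Fin n) → ℝ) (z : Fin n → Bool)
    (Q : Finset (Fin n)) :
    (Polynomial.derivative (dirPoly a z Q)).eval 1
      = ∑ S : Finset (Fin n), a S * chi z S * ((S ∩ Q).card : ℝ) := by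
  classical
  rw [dirPoly, map_sum, Polynomial.eval_finset_sum]
  apply Finset.sum_congr rfl
  intro S _
  rw [Polynomial.derivative_C_mul_X_pow]
  rw [Polynomial.eval_mul, Polynomial.eval_C, Polynomial.eval_pow, Polynomial.eval_X]
  rw [one_pow, mul_one]

lemma odec_eq {n : ℕ} (a : Finset (Fin n) → ℝ) (y z : Fin n → Bool) :
    odec a (fun i => pm (y i)) (fun i => pm (z i))
      = ∑ S : Finset (Fin n), a S * chi z S *
          (((S ∩ univ.filter (fun i => y i = z i)).card : ℝ)
            - ((S \ univ.filter (fun i => y i = z i)).card : ℝ)) := by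
  classical
  set P : Finset (Fin n) := univ.filter (fun i => y i = z i) with hPdef
  rw [odec]
  apply Finset.sum_congr rfl
  intro S _
  have hterm : ∀ i ∈ S, pm (y i) * ∏ j ∈ S.erase i, pm (z j)
      = (pm (y i) * pm (z i)) * chi z S := by
    intro i hi
    have : chi z S = pm (z i) * ∏ j ∈ S.erase i, pm (z j) :=
      (Finset.mul_prod_erase S _ hi).symm
    rw [this, show pm (y i) * pm (z i) * (pm (z i) * ∏ j ∈ S.erase i, pm (z j))
      = (pm (z i) * pm (z i)) * (pm (y i) * ∏ j ∈ S.erase i, pm (z j)) from by ring,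
      pm_sq, one_mul]
  rw [Finset.sum_congr rfl hterm]
  have hsum : ∑ i ∈ S, (pm (y i) * pm (z i)) * chi z S
      = (∑ i ∈ S, pm (y i) * pm (z i)) * chi z S := by rw [Finset.sum_mul]
  rw [hsum]
  have hsplit : ∑ i ∈ S, pm (y i) * pm (z i)
      = (∑ i ∈ S ∩ P, pm (y i) * pm (z i)) + ∑ i ∈ S \ P, pm (y i) * pm (z i) :=
    (Finset.sum_inter_add_sum_sdiff S P _).symm
  have hP1 : ∑ i ∈ S ∩ P, pm (y i) * pm (z i) = ((S ∩ P).card : ℝ) := by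
    rw [Finset.sum_congr rfl (fun i hi => ?_), Finset.sum_const, nsmul_eq_mul, mul_one]
    have : y i = z i := by
      have := Finset.mem_of_mem_inter_right hi
      rw [hPdef] at this
      exact (Finset.mem_filter.mp this).2
    rw [this, pm_sq]
  have hP2 : ∑ i ∈ S \ P, pm (y i) * pm (z i) = -((S \ P).card : ℝ) := by
    have : ∀ i ∈ S \ P, pm (y i) * pm (z i) = -1 := by
      intro i hi
      have hne : y i ≠ z i := by
        have h2 := (Finset.mem_sdiff.mp hi).2
        rw [hPdef] at h2
        intro hcon
        exact h2 (Finset.mem_filter.mpr ⟨mem_univ i, hcon⟩)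
      exact pm_mul_ne hne
    rw [Finset.sum_congr rfl this, Finset.sum_const, nsmul_eq_mul]
    ring
  rw [hsplit, hP1, hP2]
  ring

theorem stmt8 :
    ∃ C : ℝ, 0 < C ∧
      ∀ (n k : ℕ) (a : Finset (Fin n) → ℝ),
        (∀ S : Finset (Fin n), k < S.card → a S = 0) →
        ∀ M : ℝ, (∀ x : Fin n → Bool, |evalPoly a (fun i => pm (x i))| ≤ M) →
          ∀ y z : Fin n → Bool,
            |odec a (fun i => pm (y i)) (fun i => pm (z i))| ≤ C * (k : ℝ) ^ 2 * M := by
  classical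
  refine ⟨2, by norm_num, ?_⟩
  intro n k a ha M hM y z
  rcases Nat.eq_zero_or_pos k with rfl | hk
  · -- degree 0 case: odec is 0
    have hzero : odec a (fun i => pm (y i)) (fun i => pm (z i)) = 0 := by
      rw [odec]
      apply Finset.sum_eq_zero
      intro S _
      rcases Finset.eq_empty_or_nonempty S with rfl | hS
      · simp
      · rw [ha S (Finset.card_pos.mpr hS), zero_mul]
    rw [hzero]
    norm_num
  · set P : Finset (Fin n) := univ.filter (fun i => y i = z i) with hPdef
    set Q : Finset (Fin n) := univ \ P with hQdef
    have hSQ : ∀ S : Finset (Fin n), S ∩ Q = S \ P := by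
      intro S
      ext i
      simp [hQdef]
    -- odec = p'(1) - q'(1)
    have hodec : odec a (fun i => pm (y i)) (fun i => pm (z i))
        = (Polynomial.derivative (dirPoly a z P)).eval 1
          - (Polynomial.derivative (dirPoly a z Q)).eval 1 := by
      rw [odec_eq, dirPoly_deriv_one, dirPoly_deriv_one, ← Finset.sum_sub_distrib]
      apply Finset.sum_congr rfl
      intro S _
      rw [hSQ S, ← hPdef]
      ring
    -- boundedness of dirPoly on [-1,1]
    have hbound : ∀ R : Finset (Fin n), ∀ s : ℝ, |s| ≤ 1 → |(dirPoly a z R).eval s| ≤ M := by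
      intro R s hs
      rw [dirPoly_eval]
      apply cube_bound' a M hM
      intro i
      by_cases hi : i ∈ R
      · rw [if_pos hi, abs_mul, pm_abs, mul_one]
        exact hs
      · rw [if_neg hi, pm_abs]
    have h1 : |(Polynomial.derivative (dirPoly a z P)).eval 1| ≤ (k:ℝ)^2 * M :=
      markov_endpoint k hk (dirPoly a z P) (dirPoly_degree a ha z P) M (hbound P)
    have h2 : |(Polynomial.derivative (dirPoly a z Q)).eval 1| ≤ (k:ℝ)^2 * M :=
      markov_endpoint k hk (dirPoly a z Q) (dirPoly_degree a ha z Q) M (hbound Q)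
    rw [hodec]
    calc |(Polynomial.derivative (dirPoly a z P)).eval 1
          - (Polynomial.derivative (dirPoly a z Q)).eval 1|
        ≤ |(Polynomial.derivative (dirPoly a z P)).eval 1|
          + |(Polynomial.derivative (dirPoly a z Q)).eval 1| := abs_sub _ _
      _ ≤ (k:ℝ)^2 * M + (k:ℝ)^2 * M := add_le_add h1 h2
      _ = 2 * (k:ℝ)^2 * M := by ring
end
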